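/- Let p be a parity on (a class of) free braids, and define the one-term parity bracket [β]_p of a braid word β as the word obtained by deleting all classical letters ζ_i that are even with respect to p. Then β ↦ [β]_p induces a well-defined map from (the relevant class of) the free braid group FB_n to the group F_n: if β and β' represent the same element of FB_n then [β]_p and [β']_p represent the same element of F_n. -/

import Mathlib

/-! The bracket of `A ++ r ++ B` is the concatenation of the brackets of `A`, `r` and `B`,
each with the parities it inherits. The parity axioms leave the outer pieces unchanged under a
relation `r₁ = r₂` of `FB_n` and reduce the middle piece to a check on the parities of the
letters of the relation. The only case that is not a relation of `F_n` or a trivial identity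
is the classical third Reidemeister move: as an even number of its crossings are odd, either
the surviving letters coincide on both sides, or they are `ζ_i ζ_i` against `ζ_j ζ_j`, both
trivial in `F_n`. -/

set_option maxHeartbeats 1000000

namespace OneTermBracket

/-- Letters (generators) of free braid words on `n` strands:
`zeta i` is a classical crossing, `tau i` a virtual crossing, `1 ≤ i+1 ≤ n-1`. -/
inductive Letter (n : ℕ) where
  | zeta (i : Fin (n-1))
  | tau  (i : Fin (n-1))
deriving DecidableEq

namespace Letter

def idx {n : ℕ} : Letter n → Fin (n-1)
  | zeta i => i
  | tau i => i

def isZeta {n : ℕ} : Letter n → Bool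
  | zeta _ => true
  | tau _ => false

end Letter

def lo {n : ℕ} (i : Fin (n-1)) : Fin n := ⟨i.1, by have := i.2; omega⟩
def hi {n : ℕ} (i : Fin (n-1)) : Fin n := ⟨i.1 + 1, by have := i.2; omega⟩

/-- The transposition `(i, i+1)` of `{1, …, n}`. -/
def sPerm {n : ℕ} (i : Fin (n-1)) : Equiv.Perm (Fin n) := Equiv.swap (lo i) (hi i)

/-- Each letter acts on positions as the transposition `(i, i+1)`. -/
def transOf {n : ℕ} (g : Letter n) : Equiv.Perm (Fin n) := sPerm g.idx

/-- The permutation realized by the prefix of length `j` of a braid word,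
mapping the top label of a strand to its position at level `j`. -/
def prefPerm {n : ℕ} (w : List (Letter n)) (j : ℕ) : Equiv.Perm (Fin n) :=
  (((w.take j).map transOf).reverse).prod

/-- The permutation `P(β)` of a braid word (top endpoint `k` goes to bottom endpoint `P k`). -/
def permOf {n : ℕ} (w : List (Letter n)) : Equiv.Perm (Fin n) :=
  ((w.map transOf).reverse).prod

/-- The unordered pair of (top labels of the) strands crossing at position `j` of `w`. -/
def strandsAt {n : ℕ} (w : List (Letter n)) (j : ℕ) : Option (Sym2 (Fin n)) :=
  (w[j]?).map fun g => s((prefPerm w j)⁻¹ (lo g.idx), (prefPerm w j)⁻¹ (hi g.idx))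

/-- Component-wise parity determined by a partition `{1,…,n} = N₁ ⊔ N₂` (encoded by
`c : Fin n → Bool`): a classical crossing is odd (`1`) iff its two strands lie in
different parts. Non-classical positions get `0`. -/
def cwParity {n : ℕ} (c : Fin n → Bool) (w : List (Letter n)) (j : ℕ) : ZMod 2 :=
  match w[j]? with
  | some (.zeta i) =>
      if c ((prefPerm w j)⁻¹ (lo i)) = c ((prefPerm w j)⁻¹ (hi i)) then 0 else 1
  | _ => 0

/-- The defining relations of `F_n` and `FB_n` which do not involve
`ζ_i² = 1` or the classical third Reidemeister move ("strong" moves). -/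
inductive RelStrong (n : ℕ) : List (Letter n) → List (Letter n) → Prop
  | tt (i : Fin (n-1)) : RelStrong n [.tau i, .tau i] []
  | virt (i : Fin (n-1)) : RelStrong n [.zeta i, .tau i] [.tau i, .zeta i]
  | far_zz (i j : Fin (n-1)) (h : 2 ≤ Nat.dist i j) :
      RelStrong n [.zeta i, .zeta j] [.zeta j, .zeta i]
  | far_zt (i j : Fin (n-1)) (h : 2 ≤ Nat.dist i j) :
      RelStrong n [.zeta i, .tau j] [.tau j, .zeta i]
  | far_tt (i j : Fin (n-1)) (h : 2 ≤ Nat.dist i j) :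
      RelStrong n [.tau i, .tau j] [.tau j, .tau i]
  | r3v (i j : Fin (n-1)) (h : (j:ℕ) = (i:ℕ) + 1) :
      RelStrong n [.tau i, .tau j, .tau i] [.tau j, .tau i, .tau j]
  | semi (i j : Fin (n-1)) (h : (j:ℕ) = (i:ℕ) + 1) :
      RelStrong n [.tau i, .tau j, .zeta i] [.zeta j, .tau i, .tau j]

/-- The defining relations of `F_n`. -/
inductive RelF (n : ℕ) : List (Letter n) → List (Letter n) → Prop
  | strong {r1 r2} : RelStrong n r1 r2 → RelF n r1 r2
  | zz (i : Fin (n-1)) : RelF n [.zeta i, .zeta i] []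

/-- The defining relations of the free braid group `FB_n`. -/
inductive RelFB (n : ℕ) : List (Letter n) → List (Letter n) → Prop
  | ofF {r1 r2} : RelF n r1 r2 → RelFB n r1 r2
  | r3c (i j : Fin (n-1)) (h : (j:ℕ) = (i:ℕ) + 1) :
      RelFB n [.zeta i, .zeta j, .zeta i] [.zeta j, .zeta i, .zeta j]

/-- One application of a relation from `R` inside a word. -/
def StepOf {n : ℕ} (R : List (Letter n) → List (Letter n) → Prop)
    (w1 w2 : List (Letter n)) : Prop :=
  ∃ A B r1 r2, R r1 r2 ∧ w1 = A ++ r1 ++ B ∧ w2 = A ++ r2 ++ B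

/-- Strong equivalence: all moves of `F_n` except `ζ_i² = 1`. -/
def StrongEq {n : ℕ} (w1 w2 : List (Letter n)) : Prop :=
  Relation.EqvGen (StepOf (RelStrong n)) w1 w2

/-- Equivalence of braid words as elements of `F_n`. -/
def EqF {n : ℕ} (w1 w2 : List (Letter n)) : Prop :=
  Relation.EqvGen (StepOf (RelF n)) w1 w2

/-- Equivalence of braid words as elements of the free braid group `FB_n`. -/
def EqFB {n : ℕ} (w1 w2 : List (Letter n)) : Prop :=
  Relation.EqvGen (StepOf (RelFB n)) w1 w2

/-- The parity axioms, for a parity `P` defined on the class `C` of braid words.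
`P w j` is the parity of the crossing at position `j` of `w` (only classical
positions matter). -/
structure IsParity {n : ℕ} (C : List (Letter n) → Prop)
    (P : List (Letter n) → ℕ → ZMod 2) : Prop where
  /-- Crossings not taking part in a relation keep their parity (part before). -/
  untouched_left : ∀ A B r1 r2, RelFB n r1 r2 →
    C (A ++ r1 ++ B) → C (A ++ r2 ++ B) → ∀ j < A.length,
    P (A ++ r1 ++ B) j = P (A ++ r2 ++ B) j
  /-- Crossings not taking part in a relation keep their parity (part after). -/
  untouched_right : ∀ A B r1 r2, RelFB n r1 r2 →
    C (A ++ r1 ++ B) → C (A ++ r2 ++ B) → ∀ j < B.length,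
    P (A ++ r1 ++ B) (A.length + r1.length + j) = P (A ++ r2 ++ B) (A.length + r2.length + j)
  /-- In commutation-type relations (far commutativity, virtualization), the two
  letters keep their parities. -/
  comm : ∀ A B x y, RelFB n [x, y] [y, x] →
    C (A ++ [x, y] ++ B) → C (A ++ [y, x] ++ B) →
    P (A ++ [x, y] ++ B) A.length = P (A ++ [y, x] ++ B) (A.length + 1) ∧
    P (A ++ [x, y] ++ B) (A.length + 1) = P (A ++ [y, x] ++ B) A.length
  /-- In a classical second Reidemeister move both crossings have the same parity. -/
  r2c : ∀ A B (i : Fin (n-1)),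
    C (A ++ [.zeta i, .zeta i] ++ B) → C (A ++ B) →
    P (A ++ [.zeta i, .zeta i] ++ B) A.length
      = P (A ++ [.zeta i, .zeta i] ++ B) (A.length + 1)
  /-- In a semivirtual move, the classical crossing keeps its parity. -/
  semiv : ∀ A B (i j : Fin (n-1)), (j:ℕ) = (i:ℕ) + 1 →
    C (A ++ [.tau i, .tau j, .zeta i] ++ B) →
    C (A ++ [.zeta j, .tau i, .tau j] ++ B) →
    P (A ++ [.tau i, .tau j, .zeta i] ++ B) (A.length + 2)
      = P (A ++ [.zeta j, .tau i, .tau j] ++ B) A.length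
  /-- In a classical third Reidemeister move the number of odd crossings is even. -/
  r3_even : ∀ A B (i j : Fin (n-1)), (j:ℕ) = (i:ℕ) + 1 →
    C (A ++ [.zeta i, .zeta j, .zeta i] ++ B) →
    C (A ++ [.zeta j, .zeta i, .zeta j] ++ B) →
    P (A ++ [.zeta i, .zeta j, .zeta i] ++ B) A.length
      + P (A ++ [.zeta i, .zeta j, .zeta i] ++ B) (A.length + 1)
      + P (A ++ [.zeta i, .zeta j, .zeta i] ++ B) (A.length + 2) = 0
  /-- In a classical third Reidemeister move, upper/middle/lower crossings on the
  left correspond to lower/middle/upper crossings on the right with equal parities. -/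
  r3_corr : ∀ A B (i j : Fin (n-1)), (j:ℕ) = (i:ℕ) + 1 →
    C (A ++ [.zeta i, .zeta j, .zeta i] ++ B) →
    C (A ++ [.zeta j, .zeta i, .zeta j] ++ B) →
    P (A ++ [.zeta i, .zeta j, .zeta i] ++ B) A.length
      = P (A ++ [.zeta j, .zeta i, .zeta j] ++ B) (A.length + 2) ∧
    P (A ++ [.zeta i, .zeta j, .zeta i] ++ B) (A.length + 1)
      = P (A ++ [.zeta j, .zeta i, .zeta j] ++ B) (A.length + 1) ∧
    P (A ++ [.zeta i, .zeta j, .zeta i] ++ B) (A.length + 2)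
      = P (A ++ [.zeta j, .zeta i, .zeta j] ++ B) A.length

/-- Delete from `w` all classical letters whose parity (given by `par`) is even. -/
def deleteEven {n : ℕ} (w : List (Letter n)) (par : ℕ → ZMod 2) : List (Letter n) :=
  (List.range w.length).filterMap fun j =>
    (w[j]?).bind fun g =>
      match g with
      | .zeta i => if par j = 0 then none else some (.zeta i)
      | .tau i => some (.tau i)

/-- The one-term parity bracket: delete all even classical crossings. -/
def bracket {n : ℕ} (P : List (Letter n) → ℕ → ZMod 2) (w : List (Letter n)) :
    List (Letter n) :=
  deleteEven w (P w)

/-- Positions of classical crossings of a word. -/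
def ZetaPos {n : ℕ} (w : List (Letter n)) : Set ℕ :=
  {j | ∃ i, w[j]? = some (Letter.zeta i)}

/-- The classical crossings at positions `j1 < j2` form a bigon: they lie on the same
pair of strands, and no classical crossing between them lies on either of those strands. -/
def IsBigon {n : ℕ} (w : List (Letter n)) (j1 j2 : ℕ) : Prop :=
  j1 < j2 ∧ j1 ∈ ZetaPos w ∧ j2 ∈ ZetaPos w ∧
  strandsAt w j1 = strandsAt w j2 ∧
  ∀ k, j1 < k → k < j2 → k ∈ ZetaPos w →
    ∀ e e', strandsAt w j1 = some e → strandsAt w k = some e' → ∀ a ∈ e, a ∉ e'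

/-- Delete the letters at two given positions. -/
def delete2 {n : ℕ} (w : List (Letter n)) (j1 j2 : ℕ) : List (Letter n) :=
  (w.eraseIdx (max j1 j2)).eraseIdx (min j1 j2)

/-- One bigon reduction. -/
def BigonStep {n : ℕ} (w w' : List (Letter n)) : Prop :=
  ∃ j1 j2, IsBigon w j1 j2 ∧ w' = delete2 w j1 j2

/-- A word is irreducible if it admits no bigon reduction. -/
def Irreducible {n : ℕ} (w : List (Letter n)) : Prop := ¬ ∃ j1 j2, IsBigon w j1 j2

/-- Number of classical letters of a word. -/
def countZeta {n : ℕ} (w : List (Letter n)) : ℕ := (w.filter Letter.isZeta).length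

/-- `φ` is an isomorphism of the decorated graphs `Γ(w1) ≅ Γ(w2)`, encoded
combinatorially: a bijection of classical crossings preserving the pair of strands
through each crossing, the order of crossings along each strand, and the endpoint
structure (the permutation). -/
structure IsGammaIso {n : ℕ} (w1 w2 : List (Letter n)) (φ : ℕ → ℕ) : Prop where
  maps : ∀ j ∈ ZetaPos w1, φ j ∈ ZetaPos w2
  inj : ∀ j ∈ ZetaPos w1, ∀ j' ∈ ZetaPos w1, φ j = φ j' → j = j'
  surj : ∀ k ∈ ZetaPos w2, ∃ j ∈ ZetaPos w1, φ j = k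
  strands : ∀ j ∈ ZetaPos w1, strandsAt w2 (φ j) = strandsAt w1 j
  order : ∀ j ∈ ZetaPos w1, ∀ j' ∈ ZetaPos w1, j < j' →
    (∃ e e' a, strandsAt w1 j = some e ∧ strandsAt w1 j' = some e' ∧ a ∈ e ∧ a ∈ e') →
    φ j < φ j'
  perm : permOf w1 = permOf w2

/-! ### The groups `F_n` and `FB_n` as presented groups -/

/-- Generators: `Sum.inl i` is the classical generator `ζ_i`,
`Sum.inr i` is the virtual generator `τ_i`. -/
abbrev GGen (n : ℕ) := Fin (n-1) ⊕ Fin (n-1)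

def zg {n : ℕ} (i : Fin (n-1)) : FreeGroup (GGen n) := FreeGroup.of (Sum.inl i)
def tg {n : ℕ} (i : Fin (n-1)) : FreeGroup (GGen n) := FreeGroup.of (Sum.inr i)

/-- The relators of `F_n`. -/
def FRels (n : ℕ) : Set (FreeGroup (GGen n)) :=
  (⋃ i, {zg i * zg i}) ∪ (⋃ i, {tg i * tg i}) ∪
  (⋃ i, {zg i * tg i * (tg i * zg i)⁻¹}) ∪
  (⋃ (i : Fin (n-1)) (j : Fin (n-1)) (_ : 2 ≤ Nat.dist i j),
    {zg i * zg j * (zg j * zg i)⁻¹, zg i * tg j * (tg j * zg i)⁻¹,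
     tg i * tg j * (tg j * tg i)⁻¹}) ∪
  (⋃ (i : Fin (n-1)) (j : Fin (n-1)) (_ : (j:ℕ) = (i:ℕ) + 1),
    {tg i * tg j * tg i * (tg j * tg i * tg j)⁻¹,
     tg i * tg j * zg i * (zg j * tg i * tg j)⁻¹})

/-- The relators of `FB_n`: those of `F_n` together with the classical third
Reidemeister relation. -/
def FBRels (n : ℕ) : Set (FreeGroup (GGen n)) :=
  FRels n ∪
  (⋃ (i : Fin (n-1)) (j : Fin (n-1)) (_ : (j:ℕ) = (i:ℕ) + 1),
    {zg i * zg j * zg i * (zg j * zg i * zg j)⁻¹})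

/-- The group `F_n`. -/
abbrev FGrp (n : ℕ) := PresentedGroup (FRels n)

/-- The free braid group `FB_n`. -/
abbrev FBGrp (n : ℕ) := PresentedGroup (FBRels n)

def zF {n : ℕ} (i : Fin (n-1)) : FGrp n := PresentedGroup.of (Sum.inl i)
def tF {n : ℕ} (i : Fin (n-1)) : FGrp n := PresentedGroup.of (Sum.inr i)

/-- Evaluation of a braid word in `F_n`. -/
def evalF {n : ℕ} (w : List (Letter n)) : FGrp n :=
  (w.map fun g => match g with
    | Letter.zeta i => zF i
    | Letter.tau i => tF i).prod

/-- For each unordered pair of strands, the mod-2 number of classical letters of `w`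
at which these two strands cross (strand labels traced from the top). -/
def crossPar {n : ℕ} : List (Letter n) → Sym2 (Fin n) → ZMod 2
  | [], _ => 0
  | g :: rest, e =>
    (match g with
     | Letter.zeta i => if e = s(lo i, hi i) then (1 : ZMod 2) else 0
     | Letter.tau _ => 0) + crossPar rest (e.map (transOf g))

/-! ### Chord diagrams and the Gaussian parity -/

/-- The setoid on strands given by `SameCycle`; its classes are the orbits of `σ`,
i.e. the components of the closure. -/
def sameCycleSetoid {n : ℕ} (σ : Equiv.Perm (Fin n)) : Setoid (Fin n) :=
  ⟨σ.SameCycle, ⟨Equiv.Perm.SameCycle.refl σ, Equiv.Perm.SameCycle.symm,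
    Equiv.Perm.SameCycle.trans⟩⟩

/-- The rank of a strand in the single cycle of `σ` starting from strand `0`. -/
noncomputable def rankIn {n : ℕ} [NeZero n] (σ : Equiv.Perm (Fin n)) (a : Fin n) : ℕ :=
  ((Function.invFun (fun k : Fin n => (σ ^ (k : ℕ)) 0) a : Fin n) : ℕ)

/-- Coordinates on the core circle of the two endpoints of the chord of the classical
crossing at position `j` (the circle traverses the strands in the cyclic order of `σ`). -/
noncomputable def chordEnds {n : ℕ} [NeZero n] (w : List (Letter n))
    (σ : Equiv.Perm (Fin n)) (j : ℕ) : ℕ × ℕ :=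
  match w[j]? with
  | some (Letter.zeta i) =>
      (rankIn σ ((prefPerm w j)⁻¹ (lo i)) * w.length + j,
       rankIn σ ((prefPerm w j)⁻¹ (hi i)) * w.length + j)
  | _ => (0, 0)

/-- Two chords are linked iff the endpoints of one separate the endpoints of the
other on the core circle. -/
def LinkedChords {n : ℕ} [NeZero n] (w : List (Letter n)) (σ : Equiv.Perm (Fin n))
    (j k : ℕ) : Prop :=
  Xor' (min (chordEnds w σ j).1 (chordEnds w σ j).2 < (chordEnds w σ k).1 ∧
        (chordEnds w σ k).1 < max (chordEnds w σ j).1 (chordEnds w σ j).2)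
       (min (chordEnds w σ j).1 (chordEnds w σ j).2 < (chordEnds w σ k).2 ∧
        (chordEnds w σ k).2 < max (chordEnds w σ j).1 (chordEnds w σ j).2)

/-- The Gaussian parity of the classical crossing at position `j`: the mod-2 number
of chords linked with its chord. Even (`0`) iff linked with evenly many chords. -/
noncomputable def gaussParity {n : ℕ} [NeZero n] (w : List (Letter n))
    (σ : Equiv.Perm (Fin n)) (j : ℕ) : ZMod 2 :=
  (Nat.card {k : ℕ // k < w.length ∧ k ∈ ZetaPos w ∧ k ≠ j ∧ LinkedChords w σ j k} : ZMod 2)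

section EqvGen

variable {α β : Type*} {r : α → α → Prop} {s : β → β → Prop} {C : α → Prop}

theorem _root_.Relation.EqvGen.iff_of_invariant (hC : ∀ a b, r a b → (C a ↔ C b)) {a b : α}
    (h : Relation.EqvGen r a b) : C a ↔ C b :=
  (Equivalence.comap ⟨Iff.refl, Iff.symm, Iff.trans⟩ C).eqvGen_iff.mp
    (h.mono hC)

theorem _root_.Relation.EqvGen.map_of_invariant {f : α → β}
    (hC : ∀ a b, r a b → (C a ↔ C b))
    (hf : ∀ a b, r a b → C a → C b → Relation.EqvGen s (f a) (f b)) {a b : α}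
    (h : Relation.EqvGen r a b) (ha : C a) : Relation.EqvGen s (f a) (f b) := by
  induction h with
  | rel a b h => exact hf a b h ha ((hC a b h).mp ha)
  | refl a => exact .refl _
  | symm a b h ih => exact .symm _ _ (ih ((h.iff_of_invariant hC).mpr ha))
  | trans a b c h _ ih₁ ih₂ =>
    exact .trans _ _ _ (ih₁ ha) (ih₂ ((h.iff_of_invariant hC).mp ha))

end EqvGen

variable {n : ℕ}

theorem EqF.append_append {w₁ w₂ : List (Letter n)} (X Y : List (Letter n))
    (h : EqF w₁ w₂) :
    EqF (X ++ w₁ ++ Y) (X ++ w₂ ++ Y) := by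
  induction h with
  | rel a b hab =>
    obtain ⟨A, B, r₁, r₂, hr, rfl, rfl⟩ := hab
    exact .rel _ _ ⟨X ++ A, B ++ Y, r₁, r₂, hr, by simp, by simp⟩
  | refl a => exact .refl _
  | symm a b _ ih => exact .symm _ _ ih
  | trans a b c _ _ ih₁ ih₂ => exact .trans _ _ _ ih₁ ih₂

theorem RelF.eqF {r₁ r₂ : List (Letter n)} (h : RelF n r₁ r₂) : EqF r₁ r₂ :=
  .rel _ _ ⟨[], [], r₁, r₂, h, by simp, by simp⟩

theorem eqF_zeta_zeta_nil (i : Fin (n-1)) : EqF [.zeta i, .zeta i] [] :=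
  (RelF.zz i).eqF

theorem zmod_two_eq_zero_or_one (a : ZMod 2) : a = 0 ∨ a = 1 := by
  revert a; decide

def bracketLetter (g : Letter n) (a : ZMod 2) : List (Letter n) :=
  match g with
  | .zeta i => if a = 0 then [] else [.zeta i]
  | .tau i => [.tau i]

@[simp]
theorem bracketLetter_tau (i : Fin (n-1)) (a : ZMod 2) :
    bracketLetter (.tau i) a = [.tau i] :=
  rfl

@[simp]
theorem bracketLetter_zeta_zero (i : Fin (n-1)) : bracketLetter (.zeta i) 0 = [] := rfl

@[simp]
theorem bracketLetter_zeta_one (i : Fin (n-1)) : bracketLetter (.zeta i) 1 = [.zeta i] := rfl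

theorem bracketLetter_eq_nil_or_singleton (g : Letter n) (a : ZMod 2) :
    bracketLetter g a = [] ∨ bracketLetter g a = [g] := by
  cases g with
  | zeta i => rcases zmod_two_eq_zero_or_one a with rfl | rfl <;> simp
  | tau i => simp

theorem deleteEven_congr {w : List (Letter n)} {p q : ℕ → ZMod 2}
    (h : ∀ j < w.length, p j = q j) : deleteEven w p = deleteEven w q :=
  List.filterMap_congr fun j hj => by rw [h j (List.mem_range.mp hj)]

theorem deleteEven_append (u v : List (Letter n)) (p : ℕ → ZMod 2) :
    deleteEven (u ++ v) p = deleteEven u p ++ deleteEven v (fun j => p (u.length + j)) := by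
  unfold deleteEven
  rw [List.length_append, List.range_add, List.filterMap_append, List.filterMap_map]
  congr 1
  · refine List.filterMap_congr fun j hj => ?_
    rw [List.getElem?_append_left (List.mem_range.mp hj)]
  · refine List.filterMap_congr fun j _ => ?_
    simp [List.getElem?_append_right]

@[simp]
theorem deleteEven_nil (p : ℕ → ZMod 2) : deleteEven ([] : List (Letter n)) p = [] := rfl

@[simp]
theorem deleteEven_cons (g : Letter n) (w : List (Letter n)) (p : ℕ → ZMod 2) :
    deleteEven (g :: w) p = bracketLetter g (p 0) ++ deleteEven w (fun j => p (j + 1)) := by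
  rw [← List.singleton_append, deleteEven_append]
  congr 1
  · cases g <;> by_cases h : p 0 = 0 <;> simp [deleteEven, bracketLetter, h]
  · exact deleteEven_congr fun j _ => by rw [List.length_singleton, Nat.add_comm]

theorem eqF_bracketLetter_comm {x y : Letter n} (h : RelF n [x, y] [y, x]) (a b : ZMod 2) :
    EqF (bracketLetter x a ++ bracketLetter y b) (bracketLetter y b ++ bracketLetter x a) := by
  rcases bracketLetter_eq_nil_or_singleton x a with hx | hx <;>
  rcases bracketLetter_eq_nil_or_singleton y b with hy | hy <;>
  simp only [hx, hy, List.nil_append, List.append_nil]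
  all_goals first | exact .refl _ | exact h.eqF

theorem eqF_bracketLetter_zeta_zeta (i : Fin (n-1)) (a : ZMod 2) :
    EqF (bracketLetter (.zeta i) a ++ bracketLetter (.zeta i) a) [] := by
  rcases zmod_two_eq_zero_or_one a with rfl | rfl
  · exact .refl _
  · exact eqF_zeta_zeta_nil i

theorem eqF_bracketLetter_semi {i j : Fin (n-1)} (hij : (j : ℕ) = i + 1) (a : ZMod 2) :
    EqF (.tau i :: .tau j :: bracketLetter (.zeta i) a)
      (bracketLetter (.zeta j) a ++ [.tau i, .tau j]) := by
  rcases zmod_two_eq_zero_or_one a with rfl | rfl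
  · exact .refl _
  · exact (RelF.strong (.semi i j hij)).eqF

theorem eqF_bracketLetter_r3 {i j : Fin (n-1)} (a b c : ZMod 2) (h : a + b + c = 0) :
    EqF (bracketLetter (.zeta i) a ++ (bracketLetter (.zeta j) b ++ bracketLetter (.zeta i) c))
      (bracketLetter (.zeta j) c ++ (bracketLetter (.zeta i) b ++ bracketLetter (.zeta j) a)) := by
  rcases zmod_two_eq_zero_or_one a with rfl | rfl <;>
  rcases zmod_two_eq_zero_or_one b with rfl | rfl <;>
  rcases zmod_two_eq_zero_or_one c with rfl | rfl <;>
  simp only [bracketLetter_zeta_zero, bracketLetter_zeta_one, List.nil_append, List.append_nil]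
  all_goals first
    | exact absurd h (by decide)
    | exact .refl _
    | exact .trans _ _ _ (eqF_zeta_zeta_nil i) (.symm _ _ (eqF_zeta_zeta_nil j))

theorem bracket_append_append (P : List (Letter n) → ℕ → ZMod 2) (A r B : List (Letter n)) :
    bracket P (A ++ r ++ B) = deleteEven A (P (A ++ r ++ B))
      ++ deleteEven r (fun j => P (A ++ r ++ B) (A.length + j))
      ++ deleteEven B (fun j => P (A ++ r ++ B) (A.length + r.length + j)) := by
  simp only [bracket, deleteEven_append, List.length_append]

section Parity

variable {C : List (Letter n) → Prop} {P : List (Letter n) → ℕ → ZMod 2}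
  {A B r₁ r₂ : List (Letter n)}

theorem IsParity.eqF_bracket_of_eqF_deleteEven (hP : IsParity C P) (hr : RelFB n r₁ r₂)
    (hc₁ : C (A ++ r₁ ++ B)) (hc₂ : C (A ++ r₂ ++ B))
    (h : EqF (deleteEven r₁ fun j => P (A ++ r₁ ++ B) (A.length + j))
      (deleteEven r₂ fun j => P (A ++ r₂ ++ B) (A.length + j))) :
    EqF (bracket P (A ++ r₁ ++ B)) (bracket P (A ++ r₂ ++ B)) := by
  rw [bracket_append_append, bracket_append_append,
    deleteEven_congr (hP.untouched_left A B r₁ r₂ hr hc₁ hc₂),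
    deleteEven_congr (hP.untouched_right A B r₁ r₂ hr hc₁ hc₂)]
  exact h.append_append _ _

theorem IsParity.eqF_deleteEven_of_comm (hP : IsParity C P) {x y : Letter n}
    (hxy : RelF n [x, y] [y, x]) (hc₁ : C (A ++ [x, y] ++ B)) (hc₂ : C (A ++ [y, x] ++ B)) :
    EqF (deleteEven [x, y] fun j => P (A ++ [x, y] ++ B) (A.length + j))
      (deleteEven [y, x] fun j => P (A ++ [y, x] ++ B) (A.length + j)) := by
  obtain ⟨h₀, h₁⟩ := hP.comm A B x y (.ofF hxy) hc₁ hc₂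
  simp only [deleteEven_cons, deleteEven_nil, List.append_nil, Nat.add_zero, Nat.zero_add,
    h₀, h₁]
  exact eqF_bracketLetter_comm hxy _ _

theorem IsParity.eqF_deleteEven_of_relFB (hP : IsParity C P) (hr : RelFB n r₁ r₂)
    (hc₁ : C (A ++ r₁ ++ B)) (hc₂ : C (A ++ r₂ ++ B)) :
    EqF (deleteEven r₁ fun j => P (A ++ r₁ ++ B) (A.length + j))
      (deleteEven r₂ fun j => P (A ++ r₂ ++ B) (A.length + j)) := by
  rcases hr with ⟨hs | i⟩ | ⟨i, j, hij⟩
  · cases hs with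
    | virt i => exact hP.eqF_deleteEven_of_comm (.strong (.virt i)) hc₁ hc₂
    | far_zz i j h => exact hP.eqF_deleteEven_of_comm (.strong (.far_zz i j h)) hc₁ hc₂
    | far_zt i j h => exact hP.eqF_deleteEven_of_comm (.strong (.far_zt i j h)) hc₁ hc₂
    | far_tt i j h => exact hP.eqF_deleteEven_of_comm (.strong (.far_tt i j h)) hc₁ hc₂
    | tt i => exact (RelF.strong (.tt i)).eqF
    | r3v i j h => exact (RelF.strong (.r3v i j h)).eqF
    | semi i j h =>
      simp only [deleteEven_cons, deleteEven_nil, List.append_nil, Nat.add_zero, Nat.zero_add,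
        Nat.reduceAdd, bracketLetter_tau, List.cons_append, List.nil_append,
        hP.semiv A B i j h hc₁ hc₂]
      exact eqF_bracketLetter_semi h _
  · rw [List.append_nil] at hc₂
    simp only [deleteEven_cons, deleteEven_nil, List.append_nil, Nat.add_zero, Nat.zero_add,
      ← hP.r2c A B i hc₁ hc₂]
    exact eqF_bracketLetter_zeta_zeta i _
  · obtain ⟨h₀, h₁, h₂⟩ := hP.r3_corr A B i j hij hc₁ hc₂
    simp only [deleteEven_cons, deleteEven_nil, List.append_nil, Nat.add_zero, Nat.zero_add,
      Nat.reduceAdd, ← h₀, ← h₁, ← h₂]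
    exact eqF_bracketLetter_r3 _ _ _ (hP.r3_even A B i j hij hc₁ hc₂)

theorem IsParity.eqF_bracket_of_step (hP : IsParity C P) {w₁ w₂ : List (Letter n)}
    (h : StepOf (RelFB n) w₁ w₂) (hc₁ : C w₁) (hc₂ : C w₂) :
    EqF (bracket P w₁) (bracket P w₂) := by
  obtain ⟨A, B, r₁, r₂, hr, rfl, rfl⟩ := h
  exact hP.eqF_bracket_of_eqF_deleteEven hr hc₁ hc₂ (hP.eqF_deleteEven_of_relFB hr hc₁ hc₂)

end Parity

/-- the one-term parity bracket is well defined: if `β` and `β'` are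
equal in `FB_n` (within the class `C` where the parity `p` is defined), then the words
obtained by deleting all even classical letters are equal in `F_n`. -/
theorem bracket_well_defined (n : ℕ) (C : List (Letter n) → Prop)
    (P : List (Letter n) → ℕ → ZMod 2)
    (hC : ∀ w1 w2, StepOf (RelFB n) w1 w2 → (C w1 ↔ C w2))
    (hP : IsParity C P) :
    ∀ w1 w2 : List (Letter n), C w1 → EqFB w1 w2 →
      EqF (bracket P w1) (bracket P w2) :=
  fun _ _ hc h => h.map_of_invariant hC (fun _ _ => hP.eqF_bracket_of_step) hc

end OneTermBracket
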